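/- arXiv:2601.14182 — 4 statements merged into one kernel-verified Lean document; each statement's English description precedes it below -/
import Mathlib

section
/- Let A be a self-adjoint N×N complex matrix, I₁ = [E₁−η, E₁+η], I₂ = [E₂−η, E₂+η] intervals with η > 0, and z_j = E_j + iη. Then L_{I₁I₂}(A,K) ≤ (4η²/|Λ_{I₁}|) Tr(K Im R^{z₁} K* Im R^{z₂}), where R^z = (A − z·Id)^{−1} and Im R^z = (R^z − (R^z)*)/(2i). -/
open scoped ComplexConjugate Classical Matrix

/-- Standard inner product on `ℂ^N` (conjugate-linear in the first argument). -/
noncomputable def dotc {N : ℕ} (u v : Fin N → ℂ) : ℂ := ∑ i, conj (u i) * v i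

/-!
Writing the orthonormal eigenbasis as a unitary `U`, every resolvent of `A` is
`U diag((λ_α - z)⁻¹) U*`, so `Im R^{E + iη} = U diag(ℓ(λ_α)) U*` with the Lorentzian weight
`ℓ(λ) = η / ((λ - E)² + η²)`. Cyclicity of the trace then gives
`Re Tr(K Im R^{z₁} K* Im R^{z₂}) = Σ_{α,β} |⟨φ_β, K φ_α⟩|² ℓ₁(λ_α) ℓ₂(λ_β)`, a sum of nonnegative
terms. On `Λ_{I₁} × Λ_{I₂}` both weights are at least `1/(2η)`, so every term of `L` is at most
`4η²` times the corresponding term of the trace.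
-/

open Matrix Complex

noncomputable def lorentzian (E η x : ℝ) : ℝ := η / ((x - E) ^ 2 + η ^ 2)

lemma lorentzian_pos {η : ℝ} (hη : 0 < η) (E x : ℝ) : 0 < lorentzian E η x := by
  unfold lorentzian; positivity

lemma inv_two_mul_le_lorentzian {E η x : ℝ} (hη : 0 < η) (hx : x ∈ Set.Icc (E - η) (E + η)) :
    (2 * η)⁻¹ ≤ lorentzian E η x := by
  have hsq : (x - E) ^ 2 ≤ η ^ 2 := sq_le_sq' (by linarith [hx.1]) (by linarith [hx.2])
  rw [lorentzian, inv_eq_one_div, div_le_div_iff₀ (by positivity) (by positivity)]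
  nlinarith

lemma im_inv_ofReal_sub (x E η : ℝ) :
    (((x : ℂ) - (E + η * I))⁻¹).im = lorentzian E η x := by
  rw [inv_im, normSq_apply, lorentzian]
  simp only [sub_re, add_re, sub_im, add_im, ofReal_re, ofReal_im, mul_re, mul_im, I_re, I_im]
  ring_nf

namespace Matrix

variable {n : Type*} [Fintype n] [DecidableEq n]

lemma conjTranspose_mul_diagonal_mul_conjTranspose (U : Matrix n n ℂ) (d : n → ℂ) :
    (U * diagonal d * Uᴴ)ᴴ = U * diagonal (star d) * Uᴴ := by
  rw [conjTranspose_mul, conjTranspose_mul, conjTranspose_conjTranspose, diagonal_conjTranspose,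
    Matrix.mul_assoc]

lemma imPart_mul_diagonal_mul_conjTranspose (U : Matrix n n ℂ) (d : n → ℂ) :
    (2 * I)⁻¹ • (U * diagonal d * Uᴴ - (U * diagonal d * Uᴴ)ᴴ)
      = U * diagonal (fun α => ((d α).im : ℂ)) * Uᴴ := by
  rw [conjTranspose_mul_diagonal_mul_conjTranspose, ← Matrix.sub_mul, ← Matrix.mul_sub,
    diagonal_sub, ← Matrix.smul_mul, ← Matrix.mul_smul, ← diagonal_smul]
  congr 3
  funext α
  rw [im_eq_sub_conj, div_eq_inv_mul]
  rfl

lemma trace_mul_conj_diagonal_mul_conjTranspose_mul_conj_diagonal (K U : Matrix n n ℂ)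
    (d₁ d₂ : n → ℂ) :
    trace (K * (U * diagonal d₁ * Uᴴ) * Kᴴ * (U * diagonal d₂ * Uᴴ))
      = trace (Uᴴ * K * U * diagonal d₁ * (Uᴴ * K * U)ᴴ * diagonal d₂) :=
  calc _ = trace ((K * U * diagonal d₁ * Uᴴ * Kᴴ * U * diagonal d₂) * Uᴴ) := by
          simp only [Matrix.mul_assoc]
    _ = trace (Uᴴ * (K * U * diagonal d₁ * Uᴴ * Kᴴ * U * diagonal d₂)) := trace_mul_comm _ _
    _ = _ := by simp only [conjTranspose_mul, conjTranspose_conjTranspose, Matrix.mul_assoc]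

lemma re_trace_mul_diagonal_mul_conjTranspose_mul_diagonal (M : Matrix n n ℂ) (g₁ g₂ : n → ℝ) :
    (trace (M * diagonal (fun α => (g₁ α : ℂ)) * Mᴴ * diagonal (fun α => (g₂ α : ℂ)))).re
      = ∑ α, ∑ β, ‖M β α‖ ^ 2 * g₁ α * g₂ β := by
  simp only [trace, diag, mul_diagonal, mul_apply (M := M * _), conjTranspose_apply, re_sum,
    Finset.sum_mul]
  rw [Finset.sum_comm]
  refine Finset.sum_congr rfl fun α _ => Finset.sum_congr rfl fun β _ => ?_
  rw [← ofReal_re (‖M β α‖ ^ 2 * g₁ α * g₂ β)]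
  congr 1
  rw [RCLike.star_def, mul_right_comm (M β α), mul_conj, normSq_eq_norm_sq]
  push_cast
  ring

variable {U : Matrix n n ℂ}

lemma inv_unitary_mul_diagonal_mul_conjTranspose (hU : U ∈ unitaryGroup n ℂ) {d : n → ℂ}
    (hd : ∀ α, d α ≠ 0) : (U * diagonal d * Uᴴ)⁻¹ = U * diagonal d⁻¹ * Uᴴ := by
  have hUU : Uᴴ * U = 1 := Unitary.star_mul_self_of_mem hU
  have hUU' : U * Uᴴ = 1 := Unitary.mul_star_self_of_mem hU
  refine inv_eq_left_inv ?_
  calc U * diagonal d⁻¹ * Uᴴ * (U * diagonal d * Uᴴ)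
      = U * (diagonal d⁻¹ * (Uᴴ * U) * diagonal d) * Uᴴ := by simp only [Matrix.mul_assoc]
    _ = 1 := by
      rw [hUU, Matrix.mul_one, diagonal_mul_diagonal]
      have : (fun α => d⁻¹ α * d α) = fun _ => (1 : ℂ) := funext fun α => inv_mul_cancel₀ (hd α)
      rw [this, diagonal_one, Matrix.mul_one, hUU']

lemma unitary_mul_diagonal_mul_conjTranspose_sub_smul (hU : U ∈ unitaryGroup n ℂ) (d : n → ℂ)
    (z : ℂ) : U * diagonal d * Uᴴ - z • 1 = U * diagonal (fun α => d α - z) * Uᴴ := by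
  have hUU' : U * Uᴴ = 1 := Unitary.mul_star_self_of_mem hU
  calc U * diagonal d * Uᴴ - z • 1 = U * diagonal d * Uᴴ - U * diagonal (fun _ => z) * Uᴴ := by
        rw [← smul_one_eq_diagonal, Matrix.mul_smul, Matrix.mul_one, Matrix.smul_mul, hUU']
    _ = U * diagonal (fun α => d α - z) * Uᴴ := by
        rw [← Matrix.sub_mul, ← Matrix.mul_sub, diagonal_sub]

lemma resolvent_unitary_mul_diagonal_mul_conjTranspose (hU : U ∈ unitaryGroup n ℂ) {d : n → ℂ}
    {z : ℂ} (hz : ∀ α, d α ≠ z) :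
    (U * diagonal d * Uᴴ - z • 1)⁻¹ = U * diagonal (fun α => (d α - z)⁻¹) * Uᴴ := by
  rw [unitary_mul_diagonal_mul_conjTranspose_sub_smul hU,
    inv_unitary_mul_diagonal_mul_conjTranspose hU fun α => sub_ne_zero.mpr (hz α)]
  rfl

lemma imPart_resolvent_unitary_mul_diagonal_mul_conjTranspose (hU : U ∈ unitaryGroup n ℂ)
    (eig : n → ℝ) (E : ℝ) {η : ℝ} (hη : η ≠ 0) :
    let R := (U * diagonal (fun α => (eig α : ℂ)) * Uᴴ - ((E : ℂ) + η * I) • 1)⁻¹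
    (2 * I)⁻¹ • (R - Rᴴ) = U * diagonal (fun α => (lorentzian E η (eig α) : ℂ)) * Uᴴ := by
  have hz : ∀ α, (eig α : ℂ) ≠ E + η * I := fun α h => hη (by simpa using (congrArg im h).symm)
  simp only [resolvent_unitary_mul_diagonal_mul_conjTranspose hU hz,
    imPart_mul_diagonal_mul_conjTranspose, im_inv_ofReal_sub]

end Matrix

noncomputable def eigenvectorMatrix {N : ℕ} (φ : Fin N → Fin N → ℂ) : Matrix (Fin N) (Fin N) ℂ :=
  of fun i α => φ α i

section Eigenbasis

variable {N : ℕ} {φ : Fin N → Fin N → ℂ}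

lemma eigenvectorMatrix_mem_unitaryGroup
    (horth : ∀ α β, dotc (φ α) (φ β) = if α = β then 1 else 0) :
    eigenvectorMatrix φ ∈ unitaryGroup (Fin N) ℂ := by
  rw [mem_unitaryGroup_iff']
  ext α β
  simpa [mul_apply, eigenvectorMatrix, dotc, one_apply] using horth α β

lemma eq_eigenvectorMatrix_mul_diagonal_mul_conjTranspose {A : Matrix (Fin N) (Fin N) ℂ}
    {eig : Fin N → ℝ} (horth : ∀ α β, dotc (φ α) (φ β) = if α = β then 1 else 0)
    (heig : ∀ α, A *ᵥ φ α = (eig α : ℂ) • φ α) :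
    A = eigenvectorMatrix φ * diagonal (fun α => (eig α : ℂ)) * (eigenvectorMatrix φ)ᴴ := by
  have hAU : A * eigenvectorMatrix φ = eigenvectorMatrix φ * diagonal (fun α => (eig α : ℂ)) := by
    ext i α
    rw [mul_diagonal]
    simpa [mul_apply, mulVec, dotProduct, eigenvectorMatrix, mul_comm] using congrFun (heig α) i
  have hUU' : eigenvectorMatrix φ * (eigenvectorMatrix φ)ᴴ = 1 :=
    Unitary.mul_star_self_of_mem (eigenvectorMatrix_mem_unitaryGroup horth)
  rw [← hAU, Matrix.mul_assoc, hUU', Matrix.mul_one]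

lemma conjTranspose_eigenvectorMatrix_mul_mul_eigenvectorMatrix_apply
    (K : Matrix (Fin N) (Fin N) ℂ) (α β : Fin N) :
    ((eigenvectorMatrix φ)ᴴ * K * eigenvectorMatrix φ) β α = dotc (φ β) (K *ᵥ φ α) := by
  simp only [mul_apply, conjTranspose_apply, eigenvectorMatrix, of_apply, dotc, mulVec, dotProduct,
    RCLike.star_def, Finset.mul_sum, Finset.sum_mul, mul_assoc]
  exact Finset.sum_comm

end Eigenbasis

lemma le_four_mul_sq_mul_lorentzian_mul_lorentzian {c η E₁ E₂ x y : ℝ} (hc : 0 ≤ c) (hη : 0 < η)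
    (hx : x ∈ Set.Icc (E₁ - η) (E₁ + η)) (hy : y ∈ Set.Icc (E₂ - η) (E₂ + η)) :
    c ≤ 4 * η ^ 2 * (c * lorentzian E₁ η x * lorentzian E₂ η y) := by
  have hweights := mul_le_mul (inv_two_mul_le_lorentzian hη hx) (inv_two_mul_le_lorentzian hη hy)
    (by positivity) (lorentzian_pos hη _ _).le
  have h4 : 4 * η ^ 2 * ((2 * η)⁻¹ * (2 * η)⁻¹) = 1 := by field_simp; ring
  calc c = c * (4 * η ^ 2 * ((2 * η)⁻¹ * (2 * η)⁻¹)) := by rw [h4, mul_one]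
    _ ≤ c * (4 * η ^ 2 * (lorentzian E₁ η x * lorentzian E₂ η y)) := by gcongr
    _ = 4 * η ^ 2 * (c * lorentzian E₁ η x * lorentzian E₂ η y) := by ring

theorem stmt1_general (N : ℕ) (A K : Matrix (Fin N) (Fin N) ℂ)
    (φ : Fin N → (Fin N → ℂ)) (eig : Fin N → ℝ)
    (horth : ∀ α β, dotc (φ α) (φ β) = if α = β then 1 else 0)
    (heig : ∀ α, A.mulVec (φ α) = (eig α : ℂ) • φ α)
    (E₁ E₂ : ℝ) (η : ℝ) (hη : 0 < η)
    (I₁ I₂ : Set ℝ) (hI₁ : I₁ = Set.Icc (E₁ - η) (E₁ + η)) (hI₂ : I₂ = Set.Icc (E₂ - η) (E₂ + η))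
    (z₁ z₂ : ℂ) (hz₁ : z₁ = (E₁ : ℂ) + η * Complex.I) (hz₂ : z₂ = (E₂ : ℂ) + η * Complex.I)
    (R₁ R₂ ImR₁ ImR₂ : Matrix (Fin N) (Fin N) ℂ)
    (hR₁ : R₁ = (A - z₁ • (1 : Matrix (Fin N) (Fin N) ℂ))⁻¹)
    (hR₂ : R₂ = (A - z₂ • (1 : Matrix (Fin N) (Fin N) ℂ))⁻¹)
    (hImR₁ : ImR₁ = (2 * Complex.I)⁻¹ • (R₁ - R₁ᴴ))
    (hImR₂ : ImR₂ = (2 * Complex.I)⁻¹ • (R₂ - R₂ᴴ))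
    (L : ℝ)
    (hL : L = ((Set.ncard {α | eig α ∈ I₁} : ℝ))⁻¹ *
      ∑ α, ∑ β, (if eig α ∈ I₁ ∧ eig β ∈ I₂ then
        ‖dotc (φ β) (K.mulVec (φ α))‖ ^ 2 else 0)) :
    L ≤ (4 * η ^ 2 / (Set.ncard {α | eig α ∈ I₁} : ℝ)) *
      (Matrix.trace (K * ImR₁ * Kᴴ * ImR₂)).re := by
  have hU := eigenvectorMatrix_mem_unitaryGroup horth
  have hA := eq_eigenvectorMatrix_mul_diagonal_mul_conjTranspose horth heig
  subst hI₁ hI₂ hz₁ hz₂ hR₁ hR₂ hImR₁ hImR₂ hL hA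
  rw [imPart_resolvent_unitary_mul_diagonal_mul_conjTranspose hU eig E₁ hη.ne',
    imPart_resolvent_unitary_mul_diagonal_mul_conjTranspose hU eig E₂ hη.ne',
    trace_mul_conj_diagonal_mul_conjTranspose_mul_conj_diagonal,
    re_trace_mul_diagonal_mul_conjTranspose_mul_diagonal, div_mul_eq_mul_div, div_eq_inv_mul]
  refine mul_le_mul_of_nonneg_left ?_ (inv_nonneg.mpr (Nat.cast_nonneg _))
  rw [Finset.mul_sum]
  refine Finset.sum_le_sum fun α _ => ?_
  rw [Finset.mul_sum]
  refine Finset.sum_le_sum fun β _ => ?_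
  rw [conjTranspose_eigenvectorMatrix_mul_mul_eigenvectorMatrix_apply]
  split_ifs with h
  · exact le_four_mul_sq_mul_lorentzian_mul_lorentzian (by positivity) hη h.1 h.2
  · have := lorentzian_pos hη E₁ (eig α)
    have := lorentzian_pos hη E₂ (eig β)
    positivity

/-- For a self-adjoint matrix `A`, intervals `I_j = [E_j − η, E_j + η]` and
`z_j = E_j + iη`, the quantum moment `L_{I₁I₂}(A,K)` is bounded by
`(4η²/|Λ_{I₁}|) Tr(K Im R^{z₁} K* Im R^{z₂})`, where `R^z = (A − z)⁻¹` and
`Im R^z = (R^z − (R^z)*)/(2i)`. -/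
theorem stmt1 (N : ℕ) (A K : Matrix (Fin N) (Fin N) ℂ)
    (hA : A.IsHermitian)
    (φ : Fin N → (Fin N → ℂ)) (eig : Fin N → ℝ)
    (horth : ∀ α β, dotc (φ α) (φ β) = if α = β then 1 else 0)
    (heig : ∀ α, A.mulVec (φ α) = (eig α : ℂ) • φ α)
    (E₁ E₂ : ℝ) (η : ℝ) (hη : 0 < η)
    (I₁ I₂ : Set ℝ) (hI₁ : I₁ = Set.Icc (E₁ - η) (E₁ + η)) (hI₂ : I₂ = Set.Icc (E₂ - η) (E₂ + η))
    (hΛ : {α | eig α ∈ I₁}.Nonempty)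
    (z₁ z₂ : ℂ) (hz₁ : z₁ = (E₁ : ℂ) + η * Complex.I) (hz₂ : z₂ = (E₂ : ℂ) + η * Complex.I)
    (R₁ R₂ ImR₁ ImR₂ : Matrix (Fin N) (Fin N) ℂ)
    (hR₁ : R₁ = (A - z₁ • (1 : Matrix (Fin N) (Fin N) ℂ))⁻¹)
    (hR₂ : R₂ = (A - z₂ • (1 : Matrix (Fin N) (Fin N) ℂ))⁻¹)
    (hImR₁ : ImR₁ = (2 * Complex.I)⁻¹ • (R₁ - R₁ᴴ))
    (hImR₂ : ImR₂ = (2 * Complex.I)⁻¹ • (R₂ - R₂ᴴ))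
    (L : ℝ)
    (hL : L = ((Set.ncard {α | eig α ∈ I₁} : ℝ))⁻¹ *
      ∑ α, ∑ β, (if eig α ∈ I₁ ∧ eig β ∈ I₂ then
        ‖dotc (φ β) (K.mulVec (φ α))‖ ^ 2 else 0)) :
    L ≤ (4 * η ^ 2 / (Set.ncard {α | eig α ∈ I₁} : ℝ)) *
      (Matrix.trace (K * ImR₁ * Kᴴ * ImR₂)).re :=
  stmt1_general N A K φ eig horth heig E₁ E₂ η hη I₁ I₂ hI₁ hI₂ z₁ z₂ hz₁ hz₂ R₁ R₂ ImR₁ ImR₂ hR₁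
    hR₂ hImR₁ hImR₂ L hL
end

section
/- There exists a numerical constant c > 0 such that: for any a > 0, η > 0, integer n ≥ 1 and 0 < ε ≤ 1 with nε ≥ c·max(a/η, 1), and for any z = E + iη with E ∈ ℝ, there exists a nonnegative polynomial s of degree at most 2n such that sup_{λ∈[−a,a]} |η·Im(1/(λ−z)) − s(λ)| ≤ e^{−1/ε}. -/
/-!
Let `v(x) = T_n(x / a)` and `w = v(z)` for `z = E + iη`. The real polynomial
`(v - Re w)² + (Im w)²`, which equals `|w - v(x)|²` on `ℝ`, vanishes at `z`, so it is divisible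
by `(x - E)² + η² = |x - z|²`; hence `s(x) = η² |w - v(x)|² / (|w|² |x - z|²)` is a nonnegative
polynomial of degree at most `2n`. Its distance to `η² / |x - z|²` is at most
`|v(x)| (2|w| + |v(x)|) / |w|²`, hence at most `3 / |w|` on `[-a, a]`, where `|v| ≤ 1`.
Finally `|T_n(ζ)| ≥ sinh (n arsinh |Im ζ|)` (write `ζ = cos θ`) and `Im (z / a) = η / a`, so
`|w|` grows exponentially in `n min(η / a, 1)` and exceeds `3 e^{1/ε}` once
`nε ≥ 20 max(a / η, 1)`.
-/

open Polynomial

namespace Complex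

theorem cos_re (w : ℂ) : (cos w).re = Real.cos w.re * Real.cosh w.im := by
  rw [cos_eq]
  simp [cos_ofReal_re, sin_ofReal_re, cosh_ofReal_re, sinh_ofReal_re]

theorem cos_im (w : ℂ) : (cos w).im = -(Real.sin w.re * Real.sinh w.im) := by
  rw [cos_eq]
  simp [cos_ofReal_re, sin_ofReal_re, cosh_ofReal_re, sinh_ofReal_re]

theorem abs_sinh_im_le_norm_cos (w : ℂ) : |Real.sinh w.im| ≤ ‖cos w‖ := by
  rw [← abs_norm, ← sq_le_sq, Complex.sq_norm, normSq_apply, cos_re, cos_im]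
  nlinarith [Real.cosh_sq w.im, Real.sin_sq_add_cos_sq w.re, sq_nonneg (Real.cos w.re)]

end Complex

namespace Polynomial.Chebyshev

theorem sinh_mul_arsinh_abs_im_le_norm_eval_T (n : ℕ) (ζ : ℂ) :
    Real.sinh (n * Real.arsinh |ζ.im|) ≤ ‖(T ℂ n).eval ζ‖ := by
  obtain ⟨θ, rfl⟩ := Complex.cos_surjective ζ
  have him : |(Complex.cos θ).im| ≤ Real.sinh |θ.im| := by
    rw [Complex.cos_im, abs_neg, abs_mul, ← Real.abs_sinh]
    exact mul_le_of_le_one_left (abs_nonneg _) (Real.abs_sin_le_one _)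
  have harsinh : Real.arsinh |(Complex.cos θ).im| ≤ |θ.im| := by
    rwa [← Real.sinh_le_sinh, Real.sinh_arsinh]
  calc Real.sinh (n * Real.arsinh |(Complex.cos θ).im|) ≤ Real.sinh (n * |θ.im|) :=
        Real.sinh_le_sinh.2 (mul_le_mul_of_nonneg_left harsinh n.cast_nonneg)
    _ = |Real.sinh (n * θ : ℂ).im| := by simp [Real.abs_sinh, abs_mul]
    _ ≤ ‖Complex.cos (n * θ)‖ := Complex.abs_sinh_im_le_norm_cos _
    _ = ‖(T ℂ n).eval (Complex.cos θ)‖ := by rw [T_complex_cos]; norm_cast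

noncomputable def scaledT (a : ℝ) (n : ℕ) : ℝ[X] := (T ℝ n).comp (Polynomial.C a⁻¹ * X)

theorem natDegree_scaledT {a : ℝ} (ha : a ≠ 0) (n : ℕ) : (scaledT a n).natDegree = n := by
  rw [scaledT, natDegree_comp, natDegree_C_mul_X _ (inv_ne_zero ha), natDegree_T]
  simp

theorem abs_eval_scaledT_le_one {a : ℝ} (ha : 0 < a) (n : ℕ) {x : ℝ}
    (hx : x ∈ Set.Icc (-a) a) : |(scaledT a n).eval x| ≤ 1 := by
  simp only [scaledT, eval_comp, eval_mul, eval_C, eval_X]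
  refine abs_eval_T_real_le_one n ?_
  rwa [abs_mul, abs_inv, abs_of_pos ha, inv_mul_le_one₀ ha, abs_le]

theorem sinh_mul_arsinh_le_norm_aeval_scaledT {a : ℝ} (ha : 0 < a) (n : ℕ) (z : ℂ) :
    Real.sinh (n * Real.arsinh (|z.im| / a)) ≤ ‖aeval z (scaledT a n)‖ := by
  have hz : aeval z (scaledT a n) = (T ℂ n).eval (a⁻¹ * z) := by
    simp [scaledT, aeval_comp, aeval_T]
  have him : |(a⁻¹ * z : ℂ).im| = |z.im| / a := by
    rw [Complex.im_ofReal_mul, abs_mul, abs_inv, abs_of_pos ha, inv_mul_eq_div]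
  rw [hz, ← him]
  exact sinh_mul_arsinh_abs_im_le_norm_eval_T n _

end Polynomial.Chebyshev

theorem Real.div_one_add_le_arsinh {t : ℝ} (ht : 0 ≤ t) : t / (1 + t) ≤ Real.arsinh t := by
  calc t / (1 + t) = 1 - (1 + t)⁻¹ := by field_simp; ring
    _ ≤ Real.log (1 + t) := Real.one_sub_inv_le_log_of_pos (by linarith)
    _ ≤ Real.arsinh t := by
      have : 1 ≤ √(1 + t ^ 2) := Real.one_le_sqrt.2 (by nlinarith)
      exact Real.log_le_log (by linarith) (by linarith)

theorem Real.three_mul_exp_le_sinh_add_log_seven {y : ℝ} (hy : 0 ≤ y) :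
    3 * Real.exp y ≤ Real.sinh (y + Real.log 7) := by
  have h7 : Real.exp (y + Real.log 7) = 7 * Real.exp y := by
    rw [Real.exp_add, Real.exp_log (by norm_num), mul_comm]
  have hneg : Real.exp (-(y + Real.log 7)) ≤ Real.exp y :=
    Real.exp_le_exp.2 (by linarith [Real.log_nonneg (show (1 : ℝ) ≤ 7 by norm_num)])
  rw [Real.sinh_eq, h7]
  linarith

theorem three_mul_exp_le_sinh_mul_arsinh {t ε : ℝ} {n : ℕ} (ht : 0 < t) (hε : 0 < ε)
    (hε1 : ε ≤ 1) (h : 20 * max t⁻¹ 1 ≤ n * ε) :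
    3 * Real.exp (1 / ε) ≤ Real.sinh (n * Real.arsinh t) := by
  have hε_inv : 1 ≤ 1 / ε := by rw [le_div_iff₀ hε]; linarith
  have hlog7 : Real.log 7 ≤ 6 := by
    linarith [Real.log_le_sub_one_of_pos (show (0 : ℝ) < 7 by norm_num)]
  have hnt : 10 * (1 + t) ≤ n * ε * t := by
    have : 10 * (t⁻¹ + 1) ≤ n * ε := by linarith [le_max_left t⁻¹ 1, le_max_right t⁻¹ 1]
    calc 10 * (1 + t) = 10 * (t⁻¹ + 1) * t := by field_simp
      _ ≤ n * ε * t := by gcongr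
  have hlin : 10 / ε ≤ n * (t / (1 + t)) := by
    rw [div_le_iff₀ hε, mul_div_assoc', div_mul_eq_mul_div, le_div_iff₀ (by linarith)]
    linarith
  have hexp : 1 / ε + Real.log 7 ≤ n * Real.arsinh t :=
    calc 1 / ε + Real.log 7 ≤ 10 / ε := by rw [div_eq_mul_one_div 10]; linarith
      _ ≤ n * (t / (1 + t)) := hlin
      _ ≤ n * Real.arsinh t := by gcongr; exact Real.div_one_add_le_arsinh ht.le
  exact (Real.three_mul_exp_le_sinh_add_log_seven (by positivity)).trans (Real.sinh_le_sinh.2 hexp)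

theorem abs_sq_norm_sub_sq_norm_sub_le {E : Type*} [SeminormedAddCommGroup E] (a b : E) :
    |‖a‖ ^ 2 - ‖a - b‖ ^ 2| ≤ ‖b‖ * (2 * ‖a‖ + ‖b‖) := by
  have hdiff : |‖a‖ - ‖a - b‖| ≤ ‖b‖ := by
    simpa using abs_norm_sub_norm_le a (a - b)
  have hsum : ‖a‖ + ‖a - b‖ ≤ 2 * ‖a‖ + ‖b‖ := by linarith [norm_sub_le a b]
  rw [sq_sub_sq, abs_mul, abs_of_nonneg (by positivity), mul_comm]
  exact mul_le_mul hdiff hsum (by positivity) (norm_nonneg b)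

theorem Polynomial.exists_mul_eq_sq_norm_aeval_sub_eval (v : ℝ[X]) {z : ℂ} (hz : z.im ≠ 0) :
    ∃ q : ℝ[X], q.natDegree ≤ 2 * v.natDegree ∧
      ∀ x : ℝ, ((x - z.re) ^ 2 + z.im ^ 2) * q.eval x = ‖aeval z v - v.eval x‖ ^ 2 := by
  have hD : (X ^ 2 - C (2 * z.re) * X + C (‖z‖ ^ 2) : ℝ[X]).Monic := by monicity!
  set D : ℝ[X] := X ^ 2 - C (2 * z.re) * X + C (‖z‖ ^ 2)
  set w := aeval z v
  set Q : ℝ[X] := (v - C w.re) ^ 2 + C (w.im ^ 2)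
  have hQz : aeval z Q = 0 := by
    have hw : w - w.re = w.im * Complex.I := by rw [sub_eq_iff_eq_add', Complex.re_add_im]
    simp only [Q, map_add, map_pow, map_sub, aeval_C, Complex.coe_algebraMap]
    linear_combination (w - w.re + w.im * Complex.I) * hw + (w.im : ℂ) ^ 2 * Complex.I_sq
  have hDQ : D * (Q /ₘ D) = Q := by
    obtain ⟨r, hr⟩ := Q.quadratic_dvd_of_aeval_eq_zero_im_ne_zero hQz hz
    rw [hr, mul_divByMonic_cancel_left r hD]
  refine ⟨Q /ₘ D, ?_, fun x => ?_⟩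
  · calc (Q /ₘ D).natDegree = Q.natDegree - D.natDegree := natDegree_divByMonic Q hD
      _ ≤ Q.natDegree := Nat.sub_le _ _
      _ ≤ 2 * v.natDegree := by
        refine natDegree_add_le_of_degree_le (natDegree_pow_le.trans ?_) (by simp)
        rw [natDegree_sub_C]
  · have hD_eval : D.eval x = (x - z.re) ^ 2 + z.im ^ 2 := by
      simp only [D, eval_add, eval_sub, eval_pow, eval_X, eval_mul, eval_C, Complex.sq_norm,
        Complex.normSq_apply]
      ring
    have hQ_eval : Q.eval x = ‖w - v.eval x‖ ^ 2 := by
      simp only [Q, eval_add, eval_pow, eval_sub, eval_C, Complex.sq_norm, Complex.normSq_apply,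
        Complex.sub_re, Complex.sub_im, Complex.ofReal_re, Complex.ofReal_im, sub_zero]
      ring
    rw [← hD_eval, ← hQ_eval, ← eval_mul, hDQ]

theorem Polynomial.exists_nonneg_approx_lorentzian (v : ℝ[X]) {z : ℂ} (hz : z.im ≠ 0)
    (hw : aeval z v ≠ 0) :
    ∃ s : ℝ[X], s.natDegree ≤ 2 * v.natDegree ∧ (∀ x : ℝ, 0 ≤ s.eval x) ∧
      ∀ x : ℝ, |z.im ^ 2 / ((x - z.re) ^ 2 + z.im ^ 2) - s.eval x| ≤
        |v.eval x| * (2 * ‖aeval z v‖ + |v.eval x|) / ‖aeval z v‖ ^ 2 := by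
  obtain ⟨q, hq_deg, hq⟩ := v.exists_mul_eq_sq_norm_aeval_sub_eval hz
  set w := aeval z v
  have hw_pos : 0 < ‖w‖ := norm_pos_iff.2 hw
  have hd : ∀ x : ℝ, 0 < (x - z.re) ^ 2 + z.im ^ 2 := fun x => by positivity
  refine ⟨C (z.im ^ 2 / ‖w‖ ^ 2) * q, (natDegree_C_mul_le _ _).trans hq_deg, fun x => ?_,
    fun x => ?_⟩
  · rw [eval_mul, eval_C]
    exact mul_nonneg (by positivity) ((mul_nonneg_iff_of_pos_left (hd x)).1 (hq x ▸ sq_nonneg _))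
  · set d := (x - z.re) ^ 2 + z.im ^ 2
    set t := v.eval x
    have hd' : 0 < d := hd x
    have hqx : q.eval x = ‖w - t‖ ^ 2 / d := eq_div_of_mul_eq hd'.ne' (by rw [mul_comm, hq x])
    have hlor : z.im ^ 2 / d ≤ 1 :=
      div_le_one_of_le₀ (le_add_of_nonneg_left (sq_nonneg _)) hd'.le
    have hsplit : z.im ^ 2 / d - z.im ^ 2 / ‖w‖ ^ 2 * (‖w - t‖ ^ 2 / d) =
        z.im ^ 2 / d * ((‖w‖ ^ 2 - ‖w - t‖ ^ 2) / ‖w‖ ^ 2) := by field_simp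
    rw [eval_mul, eval_C, hqx, hsplit, abs_mul, abs_of_nonneg (div_nonneg (sq_nonneg _) hd'.le),
      abs_div, abs_of_pos (pow_pos hw_pos 2)]
    calc z.im ^ 2 / d * (|‖w‖ ^ 2 - ‖w - t‖ ^ 2| / ‖w‖ ^ 2)
        ≤ 1 * (|t| * (2 * ‖w‖ + |t|) / ‖w‖ ^ 2) := by
          gcongr
          simpa using abs_sq_norm_sub_sq_norm_sub_le w (t : ℂ)
      _ = |t| * (2 * ‖w‖ + |t|) / ‖w‖ ^ 2 := one_mul _

/-- There is a numerical constant `c > 0` such that for all `a > 0`, `η > 0`,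
`n ≥ 1` and `0 < ε ≤ 1` with `nε ≥ c·max(a/η, 1)`, and every `z = E + iη`, there is a
nonnegative real polynomial `s` of degree at most `2n` with
`sup_{λ ∈ [−a,a]} |η·Im(1/(λ−z)) − s(λ)| ≤ e^{−1/ε}`.
Here `η·Im(1/(λ−z)) = η²/((λ−E)² + η²)`. -/
theorem stmt3 :
    ∃ c : ℝ, 0 < c ∧
      ∀ a η : ℝ, 0 < a → 0 < η → ∀ n : ℕ, 1 ≤ n → ∀ ε : ℝ, 0 < ε → ε ≤ 1 →
        c * max (a / η) 1 ≤ (n : ℝ) * ε →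
        ∀ E : ℝ, ∃ s : Polynomial ℝ,
          s.natDegree ≤ 2 * n ∧ (∀ x : ℝ, 0 ≤ s.eval x) ∧
          ∀ l ∈ Set.Icc (-a) a,
            |η ^ 2 / ((l - E) ^ 2 + η ^ 2) - s.eval l| ≤ Real.exp (-1 / ε) := by
  refine ⟨20, by norm_num, fun a η ha hη n _ ε hε hε1 hc E => ?_⟩
  set z : ℂ := ⟨E, η⟩
  set W := ‖aeval z (Chebyshev.scaledT a n)‖
  have hW : 3 * Real.exp (1 / ε) ≤ W :=
    calc 3 * Real.exp (1 / ε) ≤ Real.sinh (n * Real.arsinh (η / a)) :=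
          three_mul_exp_le_sinh_mul_arsinh (div_pos hη ha) hε hε1 (by rwa [inv_div])
      _ ≤ W := by
          simpa [z, abs_of_pos hη] using Chebyshev.sinh_mul_arsinh_le_norm_aeval_scaledT ha n z
  have hW_one : 1 ≤ W := by linarith [Real.one_le_exp (by positivity : 0 ≤ 1 / ε)]
  obtain ⟨s, hs_deg, hs_nonneg, hs_approx⟩ :=
    (Chebyshev.scaledT a n).exists_nonneg_approx_lorentzian (z := z) hη.ne'
      (norm_pos_iff.1 (by linarith))
  rw [Chebyshev.natDegree_scaledT ha.ne'] at hs_deg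
  refine ⟨s, hs_deg, hs_nonneg, fun l hl => (hs_approx l).trans ?_⟩
  have ht := Chebyshev.abs_eval_scaledT_le_one ha n hl
  calc _ ≤ 1 * (2 * W + W) / W ^ 2 := by gcongr; linarith
    _ = 3 / W := by field_simp; ring
    _ ≤ Real.exp (-1 / ε) := by
      rw [neg_div, Real.exp_neg, div_le_iff₀ (by linarith), inv_mul_eq_div,
        le_div_iff₀ (Real.exp_pos _)]
      linarith
end

section
/- For every integer k ≥ 1, the k-th derivative of the function f(x) = (1+x²)^{−1/2} on ℝ satisfies ‖f^{(k)}‖_∞ ≤ (5k)^k. -/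
/-!
Write `s = √(1 + x²)`. Every derivative `f⁽ᵏ⁾` is a combination
`∑_{j ≤ k} c_j x^j s^{-(k+j+1)}`, and each term is bounded by `1` because `|x| ≤ s` and `1 ≤ s`.
Differentiating the term of index `j ≤ k` gives the terms `j - 1` and `j + 1` of level `k + 1`
with coefficients of total size `j + (k + j + 1) ≤ 3k + 1`, so the `ℓ¹`-norm of the coefficients
of `f⁽ᵏ⁾` is at most `∏_{i < k} (3i + 1) ≤ (3k)^k`.
-/

open Finset

noncomputable def invSqrtTerm (k j : ℕ) (x : ℝ) : ℝ :=
  x ^ j * (√(1 + x ^ 2))⁻¹ ^ (k + j + 1)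

lemma hasDerivAt_inv_sqrt_one_add_sq_pow (n : ℕ) (x : ℝ) :
    HasDerivAt (fun x : ℝ => (√(1 + x ^ 2))⁻¹ ^ (n + 1))
      (-(n + 1) * x * (√(1 + x ^ 2))⁻¹ ^ (n + 3)) x := by
  have hpos : 0 < 1 + x ^ 2 := by positivity
  have hs : √(1 + x ^ 2) ≠ 0 := (Real.sqrt_pos.2 hpos).ne'
  have hsqrt : HasDerivAt (fun x : ℝ => √(1 + x ^ 2)) (2 * x / (2 * √(1 + x ^ 2))) x := by
    simpa using ((hasDerivAt_pow 2 x).const_add 1).sqrt hpos.ne'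
  refine ((hsqrt.fun_inv hs).fun_pow (n + 1)).congr_deriv ?_
  simp only [Nat.add_sub_cancel, inv_pow]
  field_simp
  push_cast
  ring

lemma hasDerivAt_invSqrtTerm (k j : ℕ) (x : ℝ) :
    HasDerivAt (invSqrtTerm k j)
      (j * invSqrtTerm (k + 1) (j - 1) x - (k + j + 1) * invSqrtTerm (k + 1) (j + 1) x) x := by
  refine ((hasDerivAt_pow j x).fun_mul
    (hasDerivAt_inv_sqrt_one_add_sq_pow (k + j) x)).congr_deriv ?_
  simp only [invSqrtTerm]
  rcases j with _ | j
  · simp; ring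
  · simp only [Nat.add_sub_cancel]
    push_cast
    ring

lemma abs_invSqrtTerm_le_one (k j : ℕ) (x : ℝ) : |invSqrtTerm k j x| ≤ 1 := by
  have hs : 1 ≤ √(1 + x ^ 2) := Real.one_le_sqrt.2 (by nlinarith)
  have hx : |x| ≤ √(1 + x ^ 2) := by
    rw [← Real.sqrt_sq_eq_abs]; exact Real.sqrt_le_sqrt (by linarith)
  have hinv : |(√(1 + x ^ 2))⁻¹| ≤ 1 := by
    rw [abs_inv, abs_of_nonneg (Real.sqrt_nonneg _)]; exact inv_le_one_of_one_le₀ hs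
  have hratio : |x * (√(1 + x ^ 2))⁻¹| ≤ 1 := by
    rw [abs_mul, abs_inv, abs_of_nonneg (Real.sqrt_nonneg _)]
    exact mul_inv_le_one_of_le₀ hx (Real.sqrt_nonneg _)
  have hsplit :
      invSqrtTerm k j x = (x * (√(1 + x ^ 2))⁻¹) ^ j * (√(1 + x ^ 2))⁻¹ ^ (k + 1) := by
    rw [invSqrtTerm, mul_pow, show k + j + 1 = j + (k + 1) by ring, pow_add]; ring
  rw [hsplit, abs_mul, abs_pow, abs_pow]
  exact mul_le_one₀ (pow_le_one₀ (abs_nonneg _) hratio) (by positivity)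
    (pow_le_one₀ (abs_nonneg _) hinv)

def IsInvSqrtComb (k : ℕ) (M : ℝ) (g : ℝ → ℝ) : Prop :=
  ∃ c : ℕ → ℝ, ∑ j ∈ range (k + 1), |c j| ≤ M ∧
    ∀ x, g x = ∑ j ∈ range (k + 1), c j * invSqrtTerm k j x

lemma isInvSqrtComb_invSqrtTerm {k j : ℕ} (hj : j ≤ k) :
    IsInvSqrtComb k 1 (invSqrtTerm k j) := by
  refine ⟨fun i => if i = j then 1 else 0, ?_, fun x => ?_⟩
  · simp [apply_ite, Nat.lt_succ_iff.2 hj]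
  · simp [ite_mul, Nat.lt_succ_iff.2 hj]

namespace IsInvSqrtComb

variable {k : ℕ} {M M' : ℝ} {g g' : ℝ → ℝ}

lemma mono (h : IsInvSqrtComb k M g) (hM : M ≤ M') : IsInvSqrtComb k M' g :=
  let ⟨c, hc, hg⟩ := h; ⟨c, hc.trans hM, hg⟩

lemma const_mul (h : IsInvSqrtComb k M g) (a : ℝ) :
    IsInvSqrtComb k (|a| * M) (fun x => a * g x) := by
  obtain ⟨c, hc, hg⟩ := h
  refine ⟨fun j => a * c j, ?_, fun x => ?_⟩
  · simp only [abs_mul, ← mul_sum]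
    exact mul_le_mul_of_nonneg_left hc (abs_nonneg a)
  · simp only [hg, mul_sum, mul_assoc]

lemma sub (h : IsInvSqrtComb k M g) (h' : IsInvSqrtComb k M' g') :
    IsInvSqrtComb k (M + M') (fun x => g x - g' x) := by
  obtain ⟨c, hc, hg⟩ := h
  obtain ⟨c', hc', hg'⟩ := h'
  refine ⟨c - c', ?_, fun x => ?_⟩
  · calc ∑ j ∈ range (k + 1), |(c - c') j|
        ≤ ∑ j ∈ range (k + 1), (|c j| + |c' j|) := sum_le_sum fun j _ => abs_sub _ _
      _ ≤ M + M' := by rw [sum_add_distrib]; exact add_le_add hc hc'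
  · simp only [hg, hg', Pi.sub_apply, sub_mul, sum_sub_distrib]

lemma sum {ι : Type*} {s : Finset ι} {M : ι → ℝ} {g : ι → ℝ → ℝ}
    (h : ∀ i ∈ s, IsInvSqrtComb k (M i) (g i)) :
    IsInvSqrtComb k (∑ i ∈ s, M i) (fun x => ∑ i ∈ s, g i x) := by
  choose! c hc hg using h
  refine ⟨fun j => ∑ i ∈ s, c i j, ?_, fun x => ?_⟩
  · calc ∑ j ∈ range (k + 1), |∑ i ∈ s, c i j|
        ≤ ∑ j ∈ range (k + 1), ∑ i ∈ s, |c i j| :=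
          sum_le_sum fun j _ => abs_sum_le_sum_abs _ _
      _ = ∑ i ∈ s, ∑ j ∈ range (k + 1), |c i j| := sum_comm
      _ ≤ ∑ i ∈ s, M i := sum_le_sum hc
  · beta_reduce
    rw [sum_congr rfl fun i hi => hg i hi x]
    simp only [sum_mul]
    exact sum_comm

lemma abs_le (h : IsInvSqrtComb k M g) (x : ℝ) : |g x| ≤ M := by
  obtain ⟨c, hc, hg⟩ := h
  calc |g x| ≤ ∑ j ∈ range (k + 1), |c j * invSqrtTerm k j x| :=
        hg x ▸ abs_sum_le_sum_abs _ _
    _ ≤ ∑ j ∈ range (k + 1), |c j| := sum_le_sum fun j _ => by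
        rw [abs_mul]
        exact mul_le_of_le_one_right (abs_nonneg _) (abs_invSqrtTerm_le_one k j x)
    _ ≤ M := hc

end IsInvSqrtComb

lemma deriv_invSqrtTerm (k j : ℕ) :
    deriv (invSqrtTerm k j) =
      fun x => j * invSqrtTerm (k + 1) (j - 1) x - (k + j + 1) * invSqrtTerm (k + 1) (j + 1) x :=
  funext fun x => (hasDerivAt_invSqrtTerm k j x).deriv

lemma isInvSqrtComb_deriv_invSqrtTerm {k j : ℕ} (hj : j ≤ k) :
    IsInvSqrtComb (k + 1) (3 * k + 1) (deriv (invSqrtTerm k j)) := by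
  rw [deriv_invSqrtTerm]
  refine (((isInvSqrtComb_invSqrtTerm (k := k + 1) (j := j - 1) (by omega)).const_mul _).sub
    ((isInvSqrtComb_invSqrtTerm (k := k + 1) (j := j + 1) (by omega)).const_mul _)).mono ?_
  have hj' : (j : ℝ) ≤ k := by exact_mod_cast hj
  rw [abs_of_nonneg (by positivity), abs_of_nonneg (by positivity)]
  linarith

lemma IsInvSqrtComb.deriv {k : ℕ} {M : ℝ} {g : ℝ → ℝ} (h : IsInvSqrtComb k M g) :
    IsInvSqrtComb (k + 1) ((3 * k + 1) * M) (_root_.deriv g) := by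
  obtain ⟨c, hc, hg⟩ := h
  have hderiv : _root_.deriv g =
      fun x => ∑ j ∈ range (k + 1), c j * _root_.deriv (invSqrtTerm k j) x := by
    rw [show g = _ from funext hg]
    exact funext fun x => (HasDerivAt.fun_sum fun j _ =>
      ((hasDerivAt_invSqrtTerm k j x).differentiableAt.hasDerivAt).const_mul (c j)).deriv
  rw [hderiv]
  refine (IsInvSqrtComb.sum fun j hj => (isInvSqrtComb_deriv_invSqrtTerm
    (Nat.lt_succ_iff.1 (mem_range.1 hj))).const_mul (c j)).mono ?_
  rw [← sum_mul, mul_comm]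
  exact mul_le_mul_of_nonneg_left hc (by positivity)

lemma isInvSqrtComb_iteratedDeriv (k : ℕ) :
    IsInvSqrtComb k (∏ i ∈ range k, (3 * i + 1 : ℝ))
      (iteratedDeriv k fun x : ℝ => (√(1 + x ^ 2))⁻¹) := by
  induction k with
  | zero =>
    have hf : (fun x : ℝ => (√(1 + x ^ 2))⁻¹) = invSqrtTerm 0 0 := funext fun x => by
      simp [invSqrtTerm]
    simpa [hf] using isInvSqrtComb_invSqrtTerm le_rfl
  | succ k ih =>
    rw [iteratedDeriv_succ, prod_range_succ, mul_comm]
    exact ih.deriv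

lemma prod_range_three_mul_add_one_le (k : ℕ) :
    ∏ i ∈ range k, (3 * i + 1 : ℝ) ≤ (3 * k) ^ k := by
  calc ∏ i ∈ range k, (3 * i + 1 : ℝ) ≤ ∏ _i ∈ range k, (3 * k : ℝ) :=
        prod_le_prod (fun i _ => by positivity) fun i hi => by
          have : (i : ℝ) + 1 ≤ k := by exact_mod_cast mem_range.1 hi
          linarith
    _ = (3 * k) ^ k := by rw [prod_const, card_range]

theorem stmt4_general (k : ℕ) (x : ℝ) :
    |iteratedDeriv k (fun x : ℝ => (Real.sqrt (1 + x ^ 2))⁻¹) x| ≤ (5 * k : ℝ) ^ k :=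
  calc _ ≤ ∏ i ∈ range k, (3 * i + 1 : ℝ) := (isInvSqrtComb_iteratedDeriv k).abs_le x
    _ ≤ (3 * k) ^ k := prod_range_three_mul_add_one_le k
    _ ≤ (5 * k) ^ k := by gcongr; norm_num

/-- For every `k ≥ 1`, the `k`-th derivative of `f(x) = (1 + x²)^{−1/2}`
satisfies `‖f^{(k)}‖_∞ ≤ (5k)^k`. -/
theorem stmt4 (k : ℕ) (hk : 1 ≤ k) (x : ℝ) :
    |iteratedDeriv k (fun x : ℝ => (Real.sqrt (1 + x ^ 2))⁻¹) x| ≤ (5 * k : ℝ) ^ k :=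
  stmt4_general k x
end

section
/- Let Γ = Γ₁ * Γ₂ be the free product of two finite groups of orders a+1 ≥ 4 and b+1 ≥ 3, with generating sets S_i = Γ_i \ {e} (complete-graph generators), and let P = λ(p₁ 1_{S₁} + p₂ 1_{S₂}) with p₁, p₂ > 0. Suppose the resolvent satisfies the product formula R^z(e,g) = R^z(e,e)·∏_{i=1}^k h_z(g_i) for g = g_k···g₁ reduced with alternating syllables, where h_z(g_i) = ζ₁^z or ζ₂^z according to the factor. Then for every z in the upper half-plane, |ζ₁^z ζ₂^z|² ≤ 1/(ab) < 1. -/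
/-!
The resolvent identity `R ∘ (P - z) = 1`, read at the entry `(e, e)`, expresses `1` as a
combination of `R(e,e)` and the neighbour entries `R(e,s) = R(e,e) ζᵢ`; hence `R(e,e) ≠ 0`.
The row `g ↦ R(e,g)` of the bounded operator `R` has `ℓ²`-norm at most `‖R‖`. By the product
formula, each of the `(ab)ⁿ` reduced words `s₁t₁⋯sₙtₙ` (`sⱼ ∈ S₁`, `tⱼ ∈ S₂`) contributes
`|R(e,e)|² |ζ₁ζ₂|^{2n}` to that norm, so `(ab |ζ₁ζ₂|²)ⁿ |R(e,e)|² ≤ ‖R‖²` for every `n`, which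
forces `ab |ζ₁ζ₂|² ≤ 1`.
-/

open scoped ENNReal

namespace lp

variable {ι 𝕜 : Type*} [RCLike 𝕜] [DecidableEq ι]

lemma sum_norm_inner_single_sq_le (T : lp (fun _ : ι => 𝕜) 2 →L[𝕜] lp (fun _ : ι => 𝕜) 2)
    (u : ι) (F : Finset ι) :
    ∑ v ∈ F, ‖(inner 𝕜 (lp.single 2 u (1 : 𝕜)) (T (lp.single 2 v 1)) : 𝕜)‖ ^ 2 ≤ ‖T‖ ^ 2 := by
  set w := ContinuousLinearMap.adjoint T (lp.single 2 u 1)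
  have hw : ∀ v, ‖(inner 𝕜 (lp.single 2 u (1 : 𝕜)) (T (lp.single 2 v 1)) : 𝕜)‖ = ‖w v‖ := by
    intro v
    rw [← ContinuousLinearMap.adjoint_inner_left, lp.inner_single_right]
    simp [w]
  have hw_le : ‖w‖ ≤ ‖T‖ := by
    calc ‖w‖ ≤ ‖ContinuousLinearMap.adjoint T‖ * ‖(lp.single 2 u 1 : lp (fun _ : ι => 𝕜) 2)‖ :=
          ContinuousLinearMap.le_opNorm _ _
      _ = ‖T‖ := by simp [lp.norm_single]
  calc ∑ v ∈ F, ‖(inner 𝕜 (lp.single 2 u (1 : 𝕜)) (T (lp.single 2 v 1)) : 𝕜)‖ ^ 2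
      = ∑ v ∈ F, ‖w v‖ ^ (2 : ℝ≥0∞).toReal := by simp [hw]
    _ ≤ ‖w‖ ^ (2 : ℝ≥0∞).toReal := lp.sum_rpow_le_norm_rpow (by norm_num) w F
    _ ≤ ‖T‖ ^ 2 := by simpa using pow_le_pow_left₀ (norm_nonneg w) hw_le 2

variable {M : Type*} [Mul M] [DecidableEq M]

lemma inner_single_resolvent_eq_one (L R : lp (fun _ : M => 𝕜) 2 →L[𝕜] lp (fun _ : M => 𝕜) 2)
    (q : M →₀ 𝕜) (v : M) (hL : L (lp.single 2 v 1) = q.sum fun g c => c • lp.single 2 (g * v) 1)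
    (z : 𝕜) (hR : R.comp (L - z • 1) = 1) :
    (q.sum fun g c => c * inner 𝕜 (lp.single 2 v (1 : 𝕜)) (R (lp.single 2 (g * v) 1))) -
      z * inner 𝕜 (lp.single 2 v (1 : 𝕜)) (R (lp.single 2 v 1)) = 1 := by
  have h := congrArg (fun x => inner 𝕜 (lp.single 2 v (1 : 𝕜)) x)
    (ContinuousLinearMap.ext_iff.mp hR (lp.single 2 v 1))
  simpa [hL, Finsupp.sum, map_sum, inner_sum, inner_sub_right, inner_smul_right,
    lp.inner_single_left] using h

lemma inner_single_resolvent_self_ne_zero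
    {L R : lp (fun _ : M => 𝕜) 2 →L[𝕜] lp (fun _ : M => 𝕜) 2}
    {q : M →₀ 𝕜} {v : M} (hL : L (lp.single 2 v 1) = q.sum fun g c => c • lp.single 2 (g * v) 1)
    {z : 𝕜} (hR : R.comp (L - z • 1) = 1)
    (hq : ∀ g ∈ q.support, ∃ ζ, inner 𝕜 (lp.single 2 v (1 : 𝕜)) (R (lp.single 2 (g * v) 1)) =
      inner 𝕜 (lp.single 2 v (1 : 𝕜)) (R (lp.single 2 v 1)) * ζ) :
    inner 𝕜 (lp.single 2 v (1 : 𝕜)) (R (lp.single 2 v 1)) ≠ 0 := by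
  intro h0
  have h := inner_single_resolvent_eq_one L R q v hL z hR
  rw [Finsupp.sum, Finset.sum_eq_zero fun g hg => ?_, h0] at h
  · simp at h
  · obtain ⟨ζ, hζ⟩ := hq g hg
    rw [hζ, h0, zero_mul, mul_zero]

end lp

namespace Monoid.CoprodI

section Word

variable {ι : Type*} {M : ι → Type*} [∀ i, Monoid (M i)]

lemma Word.prod_eq_prod_ofFn (w : Word M) :
    w.prod = (List.ofFn fun j : Fin w.toList.length => of (w.toList.get j).2).prod := by
  rw [Word.prod, ← List.ofFn_getElem_eq_map]
  rfl

lemma Word.apply_prod_eq_of_forall_ofFn {β : Type*} [CommMonoid β] (f : CoprodI M → β) (c : β)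
    (h : ι → β)
    (hf : ∀ (k : ℕ) (idx : Fin k → ι) (x : ∀ j : Fin k, M (idx j)), (∀ j, x j ≠ 1) →
      (∀ (j : Fin k) (hj : (j : ℕ) + 1 < k), idx ⟨(j : ℕ) + 1, hj⟩ ≠ idx j) →
      f (List.ofFn fun j : Fin k => of (x j)).prod = c * ∏ j : Fin k, h (idx j))
    (w : Word M) : f w.prod = c * (w.toList.map fun l => h l.1).prod := by
  rw [w.prod_eq_prod_ofFn, hf _ _ _ (fun j => w.ne_one _ (List.get_mem _ j))
    (fun j hj => (List.isChain_iff_getElem.mp w.chain_ne j hj).symm)]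
  simp only [List.get_eq_getElem]
  rw [Fin.prod_univ_fun_getElem w.toList fun l => h l.1]

end Word

section Alternating

variable {G : Fin 2 → Type*} [∀ i, Monoid (G i)]

def alternatingLetters : List ({s : G 0 // s ≠ 1} × {t : G 1 // t ≠ 1}) → List (Σ i, G i)
  | [] => []
  | st :: l => ⟨0, st.1⟩ :: ⟨1, st.2⟩ :: alternatingLetters l

lemma ne_one_of_mem_alternatingLetters {l : List ({s : G 0 // s ≠ 1} × {t : G 1 // t ≠ 1})} :
    ∀ x ∈ alternatingLetters l, x.2 ≠ 1 := by
  induction l with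
  | nil => simp [alternatingLetters]
  | cons st l ih =>
    simp only [alternatingLetters, List.mem_cons, forall_eq_or_imp]
    exact ⟨st.1.2, st.2.2, ih⟩

lemma isChain_alternatingLetters (l : List ({s : G 0 // s ≠ 1} × {t : G 1 // t ≠ 1})) :
    (alternatingLetters l).IsChain fun x y => x.1 ≠ y.1 := by
  induction l with
  | nil => simp [alternatingLetters]
  | cons st l ih =>
    cases l with
    | nil => simp [alternatingLetters]
    | cons st' l => simpa [alternatingLetters] using ih

lemma alternatingLetters_injective :
    Function.Injective
      (alternatingLetters : List ({s : G 0 // s ≠ 1} × {t : G 1 // t ≠ 1}) → List (Σ i, G i)) := by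
  intro l l' h
  induction l generalizing l' with
  | nil => cases l' <;> simp_all [alternatingLetters]
  | cons st l ih =>
    cases l' with
    | nil => simp [alternatingLetters] at h
    | cons st' l' =>
      simp only [alternatingLetters, List.cons.injEq, Sigma.mk.injEq, heq_eq_eq, true_and] at h
      obtain ⟨h₁, h₂, h⟩ := h
      rw [Prod.ext (Subtype.ext h₁) (Subtype.ext h₂), ih h]

lemma prod_map_alternatingLetters {β : Type*} [CommMonoid β] (h : Fin 2 → β)
    (l : List ({s : G 0 // s ≠ 1} × {t : G 1 // t ≠ 1})) :
    ((alternatingLetters l).map fun x => h x.1).prod = (h 0 * h 1) ^ l.length := by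
  induction l with
  | nil => simp [alternatingLetters]
  | cons st l ih => simp [alternatingLetters, ih, pow_succ, mul_comm, mul_assoc]

def alternatingWord (l : List ({s : G 0 // s ≠ 1} × {t : G 1 // t ≠ 1})) : Word G :=
  ⟨alternatingLetters l, ne_one_of_mem_alternatingLetters, isChain_alternatingLetters l⟩

lemma alternatingWord_prod_injective [∀ i, DecidableEq (G i)] :
    Function.Injective
      fun l : List ({s : G 0 // s ≠ 1} × {t : G 1 // t ≠ 1}) => (alternatingWord l).prod :=
  fun _ _ h => alternatingLetters_injective (congrArg Word.toList (Word.equiv.symm.injective h))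

lemma pow_mul_norm_sq_le_of_alternatingWord [∀ i, Fintype (G i)] [∀ i, DecidableEq (G i)]
    (f : CoprodI G → ℂ) (c w : ℂ)
    (hf : ∀ l, f (alternatingWord l).prod = c * w ^ l.length) {B : ℝ}
    (hB : ∀ F : Finset (CoprodI G), ∑ g ∈ F, ‖f g‖ ^ 2 ≤ B) (n : ℕ) :
    ((Fintype.card {s : G 0 // s ≠ 1} * Fintype.card {t : G 1 // t ≠ 1} : ℝ) * ‖w‖ ^ 2) ^ n *
      ‖c‖ ^ 2 ≤ B := by
  have hF := hB <| Finset.univ.image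
    fun v : Fin n → {s : G 0 // s ≠ 1} × {t : G 1 // t ≠ 1} => (alternatingWord (List.ofFn v)).prod
  rw [Finset.sum_image fun _ _ _ _ h => List.ofFn_injective (alternatingWord_prod_injective h)]
    at hF
  simp only [hf, List.length_ofFn, Finset.sum_const, Finset.card_univ, Fintype.card_fun,
    Fintype.card_prod, Fintype.card_fin, nsmul_eq_mul] at hF
  calc _ = _ := by simp only [Nat.cast_pow, Nat.cast_mul, norm_mul, norm_pow]; ring
    _ ≤ _ := hF

end Alternating

end Monoid.CoprodI

lemma Finsupp.support_sum_single_subset {α β M : Type*} [AddCommMonoid M] [DecidableEq β]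
    (t : Finset α) (f : α → β) (c : M) :
    (∑ s ∈ t, Finsupp.single (f s) c).support ⊆ t.image f :=
  Finsupp.support_finsetSum.trans <| Finset.biUnion_subset.2 fun s hs =>
    Finsupp.support_single_subset.trans <| by simpa using Finset.mem_image_of_mem f hs

lemma le_one_of_forall_pow_mul_le {x C B : ℝ} (hC : 0 < C) (h : ∀ n : ℕ, x ^ n * C ≤ B) :
    x ≤ 1 := by
  by_contra! hx
  have hgrow := (tendsto_pow_atTop_atTop_of_one_lt hx).atTop_mul_const hC
  obtain ⟨n, hn⟩ := (hgrow.eventually_gt_atTop B).exists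
  exact (h n).not_gt hn

open Monoid.CoprodI

theorem stmt17_general (G : Fin 2 → Type) [∀ i, Group (G i)] [∀ i, Fintype (G i)]
    [∀ i, DecidableEq (G i)]
    (a b : ℕ) (hcard0 : Fintype.card (G 0) = a + 1) (hcard1 : Fintype.card (G 1) = b + 1)
    (ha : 3 ≤ a) (hb : 2 ≤ b)
    (p₁ p₂ : ℝ)
    (p : Monoid.CoprodI G →₀ ℂ)
    (hp : p = (∑ s ∈ Finset.univ.erase (1 : G 0),
        Finsupp.single (Monoid.CoprodI.of s) ((p₁ : ℂ))) +
      ∑ s ∈ Finset.univ.erase (1 : G 1),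
        Finsupp.single (Monoid.CoprodI.of s) ((p₂ : ℂ)))
    (lamOp : (Monoid.CoprodI G →₀ ℂ) →
      (lp (fun _ : Monoid.CoprodI G => ℂ) 2 →L[ℂ] lp (fun _ : Monoid.CoprodI G => ℂ) 2))
    (hlamOp : ∀ (q : Monoid.CoprodI G →₀ ℂ) (v : Monoid.CoprodI G),
      lamOp q (lp.single 2 v (1 : ℂ)) = q.sum fun g c => c • lp.single 2 (g * v) (1 : ℂ))
    (z : ℂ)
    (R : lp (fun _ : Monoid.CoprodI G => ℂ) 2 →L[ℂ] lp (fun _ : Monoid.CoprodI G => ℂ) 2)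
    (hR₁ : R.comp (lamOp p - z • 1) = 1)
    (ent : Monoid.CoprodI G → Monoid.CoprodI G → ℂ)
    (hent : ∀ u v : Monoid.CoprodI G, ent u v =
      (inner ℂ (lp.single 2 u (1 : ℂ)) (R (lp.single 2 v (1 : ℂ))) : ℂ))
    (ζ₁ ζ₂ : ℂ)
    (hζ₁ : ∀ s : G 0, s ≠ 1 → ent 1 (Monoid.CoprodI.of s) = ent 1 1 * ζ₁)
    (hζ₂ : ∀ s : G 1, s ≠ 1 → ent 1 (Monoid.CoprodI.of s) = ent 1 1 * ζ₂)
    (hprod : ∀ (k : ℕ) (idx : Fin k → Fin 2) (x : ∀ j : Fin k, G (idx j)),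
      (∀ j, x j ≠ 1) →
      (∀ (j : Fin k) (hj : (j : ℕ) + 1 < k), idx ⟨(j : ℕ) + 1, hj⟩ ≠ idx j) →
      ent 1 ((List.ofFn fun j : Fin k => Monoid.CoprodI.of (x j)).prod) =
        ent 1 1 * ∏ j : Fin k, (if idx j = 0 then ζ₁ else ζ₂)) :
    ‖ζ₁ * ζ₂‖ ^ 2 ≤ 1 / (a * b : ℝ) ∧ 1 / (a * b : ℝ) < 1 := by
  have hc : ent 1 1 ≠ 0 := by
    rw [hent]
    refine lp.inner_single_resolvent_self_ne_zero (hlamOp p 1) hR₁ fun g hg => ?_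
    simp only [mul_one, ← hent]
    rw [hp] at hg
    rcases Finset.mem_union.mp (Finsupp.support_add hg) with hg | hg <;>
      obtain ⟨s, hs, rfl⟩ := Finset.mem_image.mp (Finsupp.support_sum_single_subset _ _ _ hg)
    exacts [⟨ζ₁, hζ₁ s (Finset.ne_of_mem_erase hs)⟩, ⟨ζ₂, hζ₂ s (Finset.ne_of_mem_erase hs)⟩]
  have hword : ∀ l, ent 1 (alternatingWord l).prod = ent 1 1 * (ζ₁ * ζ₂) ^ l.length := fun l => by
    rw [Word.apply_prod_eq_of_forall_ofFn (ent 1) (ent 1 1) (fun i => if i = 0 then ζ₁ else ζ₂)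
      hprod]
    simp [alternatingWord, prod_map_alternatingLetters (fun i => if i = 0 then ζ₁ else ζ₂)]
  have hbound (n : ℕ) : ((a * b : ℝ) * ‖ζ₁ * ζ₂‖ ^ 2) ^ n * ‖ent 1 1‖ ^ 2 ≤ ‖R‖ ^ 2 := by
    have h := pow_mul_norm_sq_le_of_alternatingWord (ent 1) _ _ hword
      (fun F => by simpa only [← hent] using lp.sum_norm_inner_single_sq_le R 1 F) n
    simpa [hcard0, hcard1] using h
  have hab : (1 : ℝ) < a * b := by
    have : 6 ≤ a * b := Nat.mul_le_mul ha hb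
    exact_mod_cast this.trans_lt' (by norm_num)
  have hq := le_one_of_forall_pow_mul_le (by positivity) hbound
  refine ⟨?_, (div_lt_one (by linarith)).2 hab⟩
  rw [le_div_iff₀ (by linarith)]
  linarith

/-- Let `Γ = Γ₁ * Γ₂` be the free product of two finite groups of orders
`a+1 ≥ 4` and `b+1 ≥ 3`, with complete-graph generating sets `S_i = Γ_i \ {e}`, and let
`P = λ(p₁·1_{S₁} + p₂·1_{S₂})` with `p₁, p₂ > 0`. If the resolvent satisfies the product
formula `R^z(e,g) = R^z(e,e)·∏ h_z(g_i)` over reduced alternating words, with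
`h_z = ζ₁` or `ζ₂` according to the factor, then `|ζ₁ ζ₂|² ≤ 1/(ab) < 1`. -/
theorem stmt17 (G : Fin 2 → Type) [∀ i, Group (G i)] [∀ i, Fintype (G i)]
    [∀ i, DecidableEq (G i)]
    (a b : ℕ) (hcard0 : Fintype.card (G 0) = a + 1) (hcard1 : Fintype.card (G 1) = b + 1)
    (ha : 3 ≤ a) (hb : 2 ≤ b)
    (p₁ p₂ : ℝ) (hp₁ : 0 < p₁) (hp₂ : 0 < p₂)
    (p : Monoid.CoprodI G →₀ ℂ)
    (hp : p = (∑ s ∈ Finset.univ.erase (1 : G 0),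
        Finsupp.single (Monoid.CoprodI.of s) ((p₁ : ℂ))) +
      ∑ s ∈ Finset.univ.erase (1 : G 1),
        Finsupp.single (Monoid.CoprodI.of s) ((p₂ : ℂ)))
    (lamOp : (Monoid.CoprodI G →₀ ℂ) →
      (lp (fun _ : Monoid.CoprodI G => ℂ) 2 →L[ℂ] lp (fun _ : Monoid.CoprodI G => ℂ) 2))
    (hlamOp : ∀ (q : Monoid.CoprodI G →₀ ℂ) (v : Monoid.CoprodI G),
      lamOp q (lp.single 2 v (1 : ℂ)) = q.sum fun g c => c • lp.single 2 (g * v) (1 : ℂ))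
    (z : ℂ) (hz : 0 < z.im)
    (R : lp (fun _ : Monoid.CoprodI G => ℂ) 2 →L[ℂ] lp (fun _ : Monoid.CoprodI G => ℂ) 2)
    (hR₁ : R.comp (lamOp p - z • 1) = 1) (hR₂ : (lamOp p - z • 1).comp R = 1)
    (ent : Monoid.CoprodI G → Monoid.CoprodI G → ℂ)
    (hent : ∀ u v : Monoid.CoprodI G, ent u v =
      (inner ℂ (lp.single 2 u (1 : ℂ)) (R (lp.single 2 v (1 : ℂ))) : ℂ))
    (ζ₁ ζ₂ : ℂ)
    (hζ₁ : ∀ s : G 0, s ≠ 1 → ent 1 (Monoid.CoprodI.of s) = ent 1 1 * ζ₁)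
    (hζ₂ : ∀ s : G 1, s ≠ 1 → ent 1 (Monoid.CoprodI.of s) = ent 1 1 * ζ₂)
    (hprod : ∀ (k : ℕ) (idx : Fin k → Fin 2) (x : ∀ j : Fin k, G (idx j)),
      (∀ j, x j ≠ 1) →
      (∀ (j : Fin k) (hj : (j : ℕ) + 1 < k), idx ⟨(j : ℕ) + 1, hj⟩ ≠ idx j) →
      ent 1 ((List.ofFn fun j : Fin k => Monoid.CoprodI.of (x j)).prod) =
        ent 1 1 * ∏ j : Fin k, (if idx j = 0 then ζ₁ else ζ₂)) :
    ‖ζ₁ * ζ₂‖ ^ 2 ≤ 1 / (a * b : ℝ) ∧ 1 / (a * b : ℝ) < 1 :=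
  stmt17_general G a b hcard0 hcard1 ha hb p₁ p₂ p hp lamOp hlamOp z R hR₁ ent hent ζ₁ ζ₂ hζ₁ hζ₂
    hprod
end
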